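/- arXiv:2202.11640 — 3 statements merged into one kernel-verified Lean document; each statement's English description precedes it below -/
import Mathlib

section
/- Let a > 0, 0 < μ < 2, V(x) = a|x|^{-μ}. Suppose f ∈ H¹(ℝ³) with M(f) = M(Q), E_V(f) = E₀(Q), and ‖f‖²_{Ḣ¹_V} ≤ ‖∇Q‖²_{L²}, where ‖f‖²_{Ḣ¹_V} = ∫|∇f|² + V|f|² dx. Then the virial functional satisfies P_V(f) > 0, where P_V(f) = 2‖∇f‖²_{L²} + μ∫ V|f|² dx − (3/2)‖f‖⁴_{L⁴}. -/
open MeasureTheory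

noncomputable section

abbrev E3 := EuclideanSpace ℝ (Fin 3)

/-- `∫ |∇f|²` for complex-valued `f`. -/
def gradSq (f : E3 → ℂ) : ℝ := ∫ x, ‖fderiv ℝ f x‖ ^ 2

/-- Potential energy `∫ a|x|^{-μ}|f|²`. -/
def pot (a μ : ℝ) (f : E3 → ℂ) : ℝ := ∫ x, a * ‖x‖ ^ (-μ) * ‖f x‖ ^ 2

/-- `‖f‖²_{L²}`. -/
def l2 (f : E3 → ℂ) : ℝ := ∫ x, ‖f x‖ ^ 2

/-- `‖f‖⁴_{L⁴}`. -/
def l4 (f : E3 → ℂ) : ℝ := ∫ x, ‖f x‖ ^ 4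

/-- `∫ |∇Q|²` for real-valued `Q`. -/
def gradSqR (Q : E3 → ℝ) : ℝ := ∫ x, ‖fderiv ℝ Q x‖ ^ 2

/-- `‖Q‖²_{L²}` for real-valued `Q`. -/
def l2R (Q : E3 → ℝ) : ℝ := ∫ x, (Q x) ^ 2

/-- `‖Q‖⁴_{L⁴}` for real-valued `Q`. -/
def l4R (Q : E3 → ℝ) : ℝ := ∫ x, (Q x) ^ 4

lemma aux4 (μ u v L : ℝ) (hμ0 : 0 < μ) (hμ2 : μ < 2) (hu0 : 0 ≤ u)
    (hv0 : 0 < v) (huv : u < v) (hLv : L * v ≤ 4 * u ^ 3 / 3) :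
    0 < (2 * u ^ 2 + μ * (v ^ 2 / 3 + L / 2 - u ^ 2) - 3 / 2 * L) * v := by
  have hquad : 0 < (2 - 2 * μ / 3) * u ^ 2 + μ / 3 * u * v + μ / 3 * v ^ 2 := by
    have h1 : 0 ≤ (2 - 2 * μ / 3) * u ^ 2 := mul_nonneg (by linarith) (sq_nonneg u)
    have h2 : 0 ≤ μ / 3 * u * v := mul_nonneg (mul_nonneg (by linarith) hu0) hv0.le
    have h3 : 0 < μ / 3 * v ^ 2 := mul_pos (by linarith) (pow_pos hv0 2)
    linarith
  have hkey : 0 < (v - u) * ((2 - 2 * μ / 3) * u ^ 2 + μ / 3 * u * v + μ / 3 * v ^ 2) :=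
    mul_pos (by linarith) hquad
  have h3μ : 0 ≤ (3 - μ) * (4 * u ^ 3 / 3 - L * v) :=
    mul_nonneg (by linarith) (by linarith)
  nlinarith [hkey, h3μ]

/-- If `f ∈ H¹(ℝ³)` has `M(f) = M(Q)`, `E_V(f) = E₀(Q)` and `‖f‖²_{Ḣ¹_V} ≤ ‖∇Q‖²_{L²}`,
then the virial functional `P_V(f) = 2‖∇f‖² + μ∫V|f|² − (3/2)‖f‖⁴_{L⁴}` is positive. -/
theorem stmt4 (a μ : ℝ) (ha : 0 < a) (hμ0 : 0 < μ) (hμ2 : μ < 2)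
    (Q : E3 → ℝ) (f : E3 → ℂ)
    (hf : Differentiable ℝ f)
    (hf2 : Integrable (fun x => ‖f x‖ ^ 2))
    (hf4 : Integrable (fun x => ‖f x‖ ^ 4))
    (hfg : Integrable (fun x => ‖fderiv ℝ f x‖ ^ 2))
    (hfp : Integrable (fun x => a * ‖x‖ ^ (-μ) * ‖f x‖ ^ 2))
    (hQg : 0 < gradSqR Q) (hQ2 : 0 < l2R Q)
    -- Pohozaev identities for Q
    (hpoh1 : l2R Q = (1 / 3) * gradSqR Q)
    (hpoh2 : l4R Q = (4 / 3) * gradSqR Q)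
    -- sharp Gagliardo–Nirenberg inequality with constant C_GN
    (hGN : l4 f ≤ (l4R Q / ((gradSqR Q) ^ ((3 : ℝ) / 2) * (l2R Q) ^ ((1 : ℝ) / 2)))
        * (gradSq f) ^ ((3 : ℝ) / 2) * (l2 f) ^ ((1 : ℝ) / 2))
    -- M(f) = M(Q)
    (hM : (1 / 2 : ℝ) * l2 f = (1 / 2) * l2R Q)
    -- E_V(f) = E₀(Q)
    (hE : (1 / 2 : ℝ) * (gradSq f + pot a μ f) - (1 / 4) * l4 f
        = (1 / 2) * gradSqR Q - (1 / 4) * l4R Q)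
    -- ‖f‖²_{Ḣ¹_V} ≤ ‖∇Q‖²_{L²}
    (hH : gradSq f + pot a μ f ≤ gradSqR Q) :
    0 < 2 * gradSq f + μ * pot a μ f - (3 / 2) * l4 f := by

  set G := gradSq f with hGdef
  set P := pot a μ f with hPdef
  set L := l4 f with hLdef
  set g := gradSqR Q with hgdef
  -- basic positivity
  have hG0 : 0 ≤ G := integral_nonneg fun x => by positivity
  have hP0 : 0 ≤ P := integral_nonneg fun x => by positivity
  have hl2f : l2 f = g / 3 := by rw [hpoh1] at hM; linarith
  have hl4Q : l4R Q = 4 / 3 * g := by linarith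
  -- P > 0
  have hPpos : 0 < P := by
    rcases hP0.lt_or_eq with h | h
    · exact h
    · exfalso
      have hnn : 0 ≤ fun x : E3 => a * ‖x‖ ^ (-μ) * ‖f x‖ ^ 2 :=
        fun x => by positivity
      have hae : (fun x : E3 => a * ‖x‖ ^ (-μ) * ‖f x‖ ^ 2) =ᵐ[volume] 0 :=
        (integral_eq_zero_iff_of_nonneg hnn hfp).mp h.symm
      have hne : ∀ᵐ x : E3, x ≠ 0 := by
        have h0 : (volume : Measure E3) {(0 : E3)} = 0 := measure_singleton 0
        rw [MeasureTheory.ae_iff]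
        convert h0 using 2
        ext x; simp
      have hf0 : (fun x : E3 => ‖f x‖ ^ 2) =ᵐ[volume] 0 := by
        filter_upwards [hae, hne] with x h1 h2
        have hx : (0 : ℝ) < ‖x‖ := norm_pos_iff.mpr h2
        have hpos : (0 : ℝ) < a * ‖x‖ ^ (-μ) :=
          mul_pos ha (Real.rpow_pos_of_pos hx _)
        have := mul_eq_zero.mp h1
        rcases this with h' | h'
        · exact absurd h' (ne_of_gt hpos)
        · simpa using h'
      have hzero : l2 f = 0 := by
        unfold l2
        rw [integral_congr_ae hf0]
        simp
      rw [hl2f] at hzero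
      linarith
  have hGlt : G < g := by linarith
  -- set up sqrt variables
  set u := Real.sqrt G with hudef
  set v := Real.sqrt g with hvdef
  have hu0 : 0 ≤ u := Real.sqrt_nonneg _
  have hv0 : 0 < v := Real.sqrt_pos.mpr (by linarith)
  have hGu : G = u ^ 2 := (Real.sq_sqrt hG0).symm
  have hgv : g = v ^ 2 := (Real.sq_sqrt (le_of_lt hQg)).symm
  have huv : u < v := Real.sqrt_lt_sqrt hG0 hGlt
  -- rpow to sqrt conversions
  have h32 : ∀ x : ℝ, 0 ≤ x → x ^ ((3 : ℝ) / 2) = Real.sqrt x ^ 3 := by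
    intro x hx
    rw [← Real.rpow_natCast (Real.sqrt x) 3, Real.sqrt_eq_rpow, ← Real.rpow_mul hx]
    norm_num
  have h12 : ∀ x : ℝ, 0 ≤ x → x ^ ((1 : ℝ) / 2) = Real.sqrt x := by
    intro x hx
    rw [Real.sqrt_eq_rpow]
  have hw' : Real.sqrt (v ^ 2 / 3) ≠ 0 :=
    ne_of_gt (Real.sqrt_pos.mpr (by positivity))
  have hL : L ≤ 4 * u ^ 3 / (3 * v) := by
    have h1 : l4R Q / (g ^ ((3 : ℝ) / 2) * l2R Q ^ ((1 : ℝ) / 2)) * G ^ ((3 : ℝ) / 2)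
        * l2 f ^ ((1 : ℝ) / 2) = 4 * u ^ 3 / (3 * v) := by
      rw [hl4Q, hl2f, hpoh1, h32 g hQg.le, h32 G hG0,
        show (1 / 3 * g : ℝ) = g / 3 by ring, h12 (g / 3) (by linarith),
        ← hvdef, ← hudef, hgv]
      field_simp
    linarith [hGN, h1.le]
  clear_value G P L g u v
  -- energy identity
  have hEeq : G + P = g / 3 + L / 2 := by
    rw [hl4Q] at hE; linarith
  have hXv : 0 < (2 * G + μ * P - 3 / 2 * L) * v := by
    have hLv : L * v ≤ 4 * u ^ 3 / 3 := by
      have h2 : 4 * u ^ 3 / (3 * v) * v = 4 * u ^ 3 / 3 := by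
        field_simp
      calc L * v ≤ 4 * u ^ 3 / (3 * v) * v := mul_le_mul_of_nonneg_right hL hv0.le
        _ = 4 * u ^ 3 / 3 := h2
    have hPe : P = v ^ 2 / 3 + L / 2 - u ^ 2 := by
      rw [← hGu, ← hgv]; linarith
    rw [hPe, hGu]
    exact aux4 μ u v L hμ0 hμ2 hu0 hv0 huv hLv
  by_contra hc
  push_neg at hc
  have hneg : (2 * G + μ * P - 3 / 2 * L) * v ≤ 0 :=
    mul_nonpos_iff.mpr (Or.inr ⟨hc, hv0.le⟩)
  linarith
end
end

section
/- Let a > 0 and f ∈ H¹(ℝ³) with |x|f ∈ L²(ℝ³), M(f) = M(Q), and E_V(f) = E₀(Q). Define δ(f) = ‖∇Q‖²_{L²} − ‖f‖²_{Ḣ¹_V}. Then there is a constant C depending only on Q such that (Im ∫_{ℝ³}(x·∇f) f̄ dx)² ≤ C |δ(f)|² ∫_{ℝ³}|x|²|f|² dx. -/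
open MeasureTheory

noncomputable section

lemma stmt8_core (u : ℝ) (hu : 0 ≤ u) :
    (2*u+1)/3 - u ^ ((2:ℝ)/3) ≤ (1-u)^2/3 := by
  have hv : 0 ≤ u ^ ((1:ℝ)/3) := Real.rpow_nonneg hu _
  set v := u ^ ((1:ℝ)/3) with hvdef
  have h3 : v ^ (3:ℕ) = u := by
    rw [hvdef, ← Real.rpow_natCast (u ^ ((1:ℝ)/3)) 3, ← Real.rpow_mul hu]
    norm_num
  have h2 : u ^ ((2:ℝ)/3) = v ^ (2:ℕ) := by
    rw [hvdef, ← Real.rpow_natCast (u ^ ((1:ℝ)/3)) 2, ← Real.rpow_mul hu]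
    norm_num
  rw [h2, ← h3]
  nlinarith [mul_nonneg (sq_nonneg (v*(v-1)))
      (by nlinarith [sq_nonneg (v+1)] : (0:ℝ) ≤ v^2+2*v+3),
    sq_nonneg (v-1), sq_nonneg v]

/-- If `f ∈ H¹(ℝ³)` with `|x|f ∈ L²`, `M(f) = M(Q)` and `E_V(f) = E₀(Q)`, then, with
`δ(f) = ‖∇Q‖²_{L²} − ‖f‖²_{Ḣ¹_V}`, one has
`(Im∫(x·∇f)f̄)² ≤ C|δ(f)|²∫|x|²|f|²` for a constant `C` depending only on `Q`. -/
theorem stmt8 (a μ : ℝ) (ha : 0 < a) (hμ1 : 1 < μ) (hμ2 : μ < 2)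
    (Q : E3 → ℝ)
    (hQg : 0 < gradSqR Q) (hQ2 : 0 < l2R Q) (hQ4 : 0 < l4R Q)
    -- Pohozaev identities for Q
    (hpoh1 : l2R Q = (1 / 3) * gradSqR Q)
    (hpoh2 : l4R Q = (4 / 3) * gradSqR Q) :
    ∃ C > 0, ∀ f : E3 → ℂ, Differentiable ℝ f →
      Integrable (fun x => ‖f x‖ ^ 2) →
      Integrable (fun x => ‖x‖ ^ 2 * ‖f x‖ ^ 2) →
      Integrable (fun x => ‖fderiv ℝ f x‖ ^ 2) →
      Integrable (fun x => a * ‖x‖ ^ (-μ) * ‖f x‖ ^ 2) →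
      -- M(f) = M(Q)
      (1 / 2 : ℝ) * l2 f = (1 / 2) * l2R Q →
      -- E_V(f) = E₀(Q)
      ((1 / 2 : ℝ) * (gradSq f + pot a μ f) - (1 / 4) * l4 f
        = (1 / 2) * gradSqR Q - (1 / 4) * l4R Q) →
      -- discriminant inequality (may be assumed)
      ((∫ x, ((fderiv ℝ f x x) * (starRingEnd ℂ) (f x)).im) ^ 2
        ≤ (∫ x, ‖x‖ ^ 2 * ‖f x‖ ^ 2)
          * ((gradSq f + pot a μ f)
            - (l4 f / ((l4R Q / ((gradSqR Q) ^ ((3 : ℝ) / 2) * (l2R Q) ^ ((1 : ℝ) / 2)))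
                * (l2 f) ^ ((1 : ℝ) / 2))) ^ ((2 : ℝ) / 3))) →
      (∫ x, ((fderiv ℝ f x x) * (starRingEnd ℂ) (f x)).im) ^ 2
        ≤ C * |gradSqR Q - (gradSq f + pot a μ f)| ^ 2
          * ∫ x, ‖x‖ ^ 2 * ‖f x‖ ^ 2 := by
  have hC : (0:ℝ) < 3/(4*gradSqR Q) := div_pos (by norm_num) (by linarith)
  refine ⟨3/(4*gradSqR Q), hC, ?_⟩
  intro f hdiff hi2 hiw hig hip hmass henergy hdisc
  have hG : 0 < gradSqR Q := hQg
  set G := gradSqR Q with hGdef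
  set K := gradSq f + pot a μ f with hKdef
  set P := l4 f with hPdef
  set W := (∫ x, ‖x‖ ^ 2 * ‖f x‖ ^ 2) with hWdef
  have hWnn : 0 ≤ W := integral_nonneg fun x => by positivity
  have hPnn : 0 ≤ P := integral_nonneg fun x => by positivity
  have hl2f : l2 f = l2R Q := by linarith
  have hP' : P = (2/3) * (3*K - G) := by linarith
  have hKG : G ≤ 3*K := by nlinarith
  set u := (3*K - G)/(2*G) with hudef
  have hu : 0 ≤ u := div_nonneg (by linarith) (by linarith)
  have hsq : 0 < G ^ ((1:ℝ)/2) := Real.rpow_pos_of_pos hG _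
  have hA : 0 < (l2R Q) ^ ((1:ℝ)/2) := Real.rpow_pos_of_pos hQ2 _
  have h32 : G ^ ((3:ℝ)/2) = G * G ^ ((1:ℝ)/2) := by
    rw [show ((3:ℝ)/2) = 1 + 1/2 by norm_num, Real.rpow_add hG, Real.rpow_one]
  have hK : K = G*(2*u+1)/3 := by
    rw [hudef]; field_simp; ring
  have hden : (l4R Q / (G ^ ((3:ℝ)/2) * (l2R Q) ^ ((1:ℝ)/2))) * (l2R Q) ^ ((1:ℝ)/2)
      = (4/3) / G ^ ((1:ℝ)/2) := by
    rw [hpoh2, h32]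
    field_simp
  have harg : P / ((4/3) / G ^ ((1:ℝ)/2)) = u * G ^ ((3:ℝ)/2) := by
    rw [h32, hudef, hP']
    field_simp
    ring
  have hpow : (u * G ^ ((3:ℝ)/2)) ^ ((2:ℝ)/3) = u ^ ((2:ℝ)/3) * G := by
    rw [Real.mul_rpow hu (Real.rpow_nonneg hG.le _), ← Real.rpow_mul hG.le]
    norm_num
  rw [hl2f, hden, harg, hpow] at hdisc
  have hcore := stmt8_core u hu
  have hB : K - u ^ ((2:ℝ)/3) * G ≤ 3/(4*G) * |G - K|^2 := by
    have h1 : K - u ^ ((2:ℝ)/3) * G = G * ((2*u+1)/3 - u ^ ((2:ℝ)/3)) := by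
      rw [hK]; ring
    have h2 : 3/(4*G) * |G - K|^2 = G * ((1-u)^2/3) := by
      rw [sq_abs, hK]; field_simp; ring
    rw [h1, h2]
    exact mul_le_mul_of_nonneg_left hcore hG.le
  calc (∫ x, ((fderiv ℝ f x x) * (starRingEnd ℂ) (f x)).im) ^ 2
      ≤ W * (K - u ^ ((2:ℝ)/3) * G) := hdisc
    _ ≤ W * (3/(4*G) * |G - K|^2) := mul_le_mul_of_nonneg_left hB hWnn
    _ = 3/(4*G) * |G - K|^2 * W := by ring
end
end

section
/- Let f : [0, ∞) → ℝ be a C² function with f(t) > 0 and f''(t) < 0 for all t ≥ 0, and suppose there exists C > 0 such that (f'(t))² ≤ C (f''(t))² f(t) for all t ≥ 0. If in addition f'(t) > 0 for all t ≥ 0, then √(f(t)) is bounded on [0,∞), and there exist constants C', c > 0 such that f'(t) ≤ C' e^{-ct} for all t ≥ 0. -/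
/-- ODE argument for exponential decay of the virial quantity: if `f > 0`, `f'' < 0`,
`(f')² ≤ C(f'')²f` and `f' > 0` on `[0,∞)`, then `√f` is bounded and
`f'(t) ≤ C' e^{-ct}`. -/
theorem stmt10 (f : ℝ → ℝ) (hf : ContDiff ℝ 2 f)
    (hpos : ∀ t ≥ (0 : ℝ), 0 < f t)
    (hconc : ∀ t ≥ (0 : ℝ), deriv (deriv f) t < 0)
    (C : ℝ) (hC : 0 < C)
    (hineq : ∀ t ≥ (0 : ℝ), (deriv f t) ^ 2 ≤ C * (deriv (deriv f) t) ^ 2 * f t)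
    (hf' : ∀ t ≥ (0 : ℝ), 0 < deriv f t) :
    (∃ M : ℝ, ∀ t ≥ (0 : ℝ), Real.sqrt (f t) ≤ M) ∧
    ∃ C' > (0 : ℝ), ∃ c > (0 : ℝ), ∀ t ≥ (0 : ℝ), deriv f t ≤ C' * Real.exp (-c * t) := by
  have hdf : Differentiable ℝ f := hf.differentiable (by norm_num)
  have hcd1 : ContDiff ℝ 1 (deriv f) :=
    (contDiff_succ_iff_deriv.mp (by exact_mod_cast hf : ContDiff ℝ ((1:ℕ)+1) f)).2.2
  have hdf' : Differentiable ℝ (deriv f) := hcd1.differentiable (by norm_num)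
  -- key pointwise inequality
  have key : ∀ t ≥ (0:ℝ), deriv f t ≤
      Real.sqrt C * (-(deriv (deriv f) t)) * Real.sqrt (f t) := by
    intro t ht
    have h1 : deriv f t = Real.sqrt ((deriv f t)^2) := (Real.sqrt_sq (hf' t ht).le).symm
    rw [h1]
    calc Real.sqrt ((deriv f t)^2)
        ≤ Real.sqrt (C * (deriv (deriv f) t)^2 * f t) := Real.sqrt_le_sqrt (hineq t ht)
      _ = Real.sqrt C * (-(deriv (deriv f) t)) * Real.sqrt (f t) := by
          rw [Real.sqrt_mul (by positivity), Real.sqrt_mul hC.le, Real.sqrt_sq_eq_abs,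
            abs_of_neg (hconc t ht)]
  -- Part 1: boundedness of √f via g = 2√f + √C f'
  set g : ℝ → ℝ := fun t => 2 * Real.sqrt (f t) + Real.sqrt C * deriv f t with hg
  have hganti : AntitoneOn g (Set.Ici 0) := by
    have hder : ∀ t ∈ Set.Ioi (0:ℝ), HasDerivAt g
        (2 * (1 / (2 * Real.sqrt (f t)) * deriv f t) +
          Real.sqrt C * deriv (deriv f) t) t := by
      intro t ht
      have htpos : (0:ℝ) < t := ht
      have hft : f t ≠ 0 := (hpos t htpos.le).ne'
      have h1 : HasDerivAt (fun t => Real.sqrt (f t))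
          (1 / (2 * Real.sqrt (f t)) * deriv f t) t :=
        (Real.hasDerivAt_sqrt hft).comp t (hdf t).hasDerivAt
      exact ((h1.const_mul 2).add (((hdf' t).hasDerivAt).const_mul (Real.sqrt C)))
    apply antitoneOn_of_deriv_nonpos (convex_Ici 0)
    · exact (continuous_const.mul (Real.continuous_sqrt.comp hdf.continuous)).continuousOn.add
        (continuous_const.mul hdf'.continuous).continuousOn
    · intro t ht
      rw [interior_Ici] at ht
      exact (hder t ht).differentiableAt.differentiableWithinAt
    · intro t ht
      rw [interior_Ici] at ht
      rw [(hder t ht).deriv]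
      have htpos : (0:ℝ) < t := ht
      have hsq : 0 < Real.sqrt (f t) := Real.sqrt_pos.mpr (hpos t htpos.le)
      have hk := key t htpos.le
      have : deriv f t / Real.sqrt (f t) ≤ Real.sqrt C * (-(deriv (deriv f) t)) := by
        rw [div_le_iff₀ hsq]; exact hk
      have h2 : 2 * (1 / (2 * Real.sqrt (f t)) * deriv f t)
          = deriv f t / Real.sqrt (f t) := by field_simp
      rw [h2]; nlinarith
  set M : ℝ := g 0 with hM
  have hM0 : M = 2 * Real.sqrt (f 0) + Real.sqrt C * deriv f 0 := rfl
  have hMpos : 0 < M := by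
    have h1 := Real.sqrt_pos.mpr (hpos 0 le_rfl)
    have h2 := mul_pos (Real.sqrt_pos.mpr hC) (hf' 0 le_rfl)
    rw [hM0]; linarith
  have hbound : ∀ t ≥ (0:ℝ), Real.sqrt (f t) ≤ M := by
    intro t ht
    have hgt : g t ≤ g 0 := hganti Set.self_mem_Ici ht ht
    have hs : 0 ≤ Real.sqrt (f t) := Real.sqrt_nonneg _
    have hsc : 0 < Real.sqrt C * deriv f t :=
      mul_pos (Real.sqrt_pos.mpr hC) (hf' t ht)
    simp only [hg] at hgt
    linarith [hM0]
  refine ⟨⟨M, hbound⟩, ?_⟩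
  -- Part 2: exponential decay
  set c : ℝ := 1 / (Real.sqrt C * M) with hc
  have hsC : 0 < Real.sqrt C := Real.sqrt_pos.mpr hC
  have hcpos : 0 < c := by rw [hc]; exact one_div_pos.mpr (mul_pos hsC hMpos)
  refine ⟨deriv f 0, hf' 0 le_rfl, c, hcpos, ?_⟩
  set ψ : ℝ → ℝ := fun t => deriv f t * Real.exp (c * t) with hψ
  have hψanti : AntitoneOn ψ (Set.Ici 0) := by
    have hder : ∀ t : ℝ, HasDerivAt ψ
        (deriv (deriv f) t * Real.exp (c * t) + deriv f t * (Real.exp (c * t) * c)) t := by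
      intro t
      have he : HasDerivAt (fun t => Real.exp (c * t)) (Real.exp (c * t) * c) t := by
        have := ((hasDerivAt_id t).const_mul c).exp
        simpa [mul_comm] using this
      exact ((hdf' t).hasDerivAt).mul he
    apply antitoneOn_of_deriv_nonpos (convex_Ici 0)
    · exact fun t _ => ((hder t).differentiableAt).continuousAt.continuousWithinAt
    · exact fun t _ => (hder t).differentiableAt.differentiableWithinAt
    · intro t ht
      rw [interior_Ici] at ht
      have htpos : (0:ℝ) < t := ht
      rw [(hder t).deriv]
      have hk := key t htpos.le
      have hb := hbound t htpos.le
      have hcon := hconc t htpos.le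
      have h1 : deriv f t ≤ Real.sqrt C * M * (-(deriv (deriv f) t)) := by
        calc deriv f t ≤ Real.sqrt C * (-(deriv (deriv f) t)) * Real.sqrt (f t) := hk
          _ ≤ Real.sqrt C * (-(deriv (deriv f) t)) * M := by
              exact mul_le_mul_of_nonneg_left hb (mul_nonneg hsC.le (by linarith))
          _ = Real.sqrt C * M * (-(deriv (deriv f) t)) := by ring
      have h2 : deriv f t * c ≤ -(deriv (deriv f) t) := by
        rw [hc, mul_one_div, div_le_iff₀ (mul_pos hsC hMpos)]
        linarith
      have hexp : 0 < Real.exp (c * t) := Real.exp_pos _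
      nlinarith
  intro t ht
  have := hψanti Set.self_mem_Ici ht ht
  simp only [hψ, mul_zero, Real.exp_zero, mul_one] at this
  have hexp : 0 < Real.exp (c * t) := Real.exp_pos _
  rw [neg_mul, Real.exp_neg, ← div_eq_mul_inv, le_div_iff₀ hexp]
  exact this
end
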